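/- Let n ≥ 0 and set ξ_0 = 1, ξ_{n+2} = −1, and ξ_k = cos((2k−1)π/(2n+2)) for 1 ≤ k ≤ n+1, so that 1 = ξ_0 > ξ_1 > ⋯ > ξ_{n+1} > ξ_{n+2} = −1. Then for each 1 ≤ k ≤ n+1 the polynomial S_{2n+1} has exactly one zero in the open interval (ξ_{k+1}, ξ_k); these n+1 zeroes together with x = 1 exhaust all the zeroes of S_{2n+1}, and all zeroes of S_{2n+1} are simple. -/
import Mathlib


open Polynomial Polynomial.Chebyshev Real

/-- `S_{2n+1}(x) = 2(2nx² + 2x² + 2nx − x − 1)Uₙ(x) − 2(2nx + 3x + 2n + 1)U_{n-1}(x)`. -/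
noncomputable def S2n1 (n : ℕ) : Polynomial ℝ :=
  Polynomial.C (2 : ℝ) *
      (Polynomial.C (2 * (n : ℝ) + 2) * Polynomial.X ^ 2 +
        Polynomial.C (2 * (n : ℝ) - 1) * Polynomial.X - 1) * U ℝ (n : ℤ) -
    Polynomial.C (2 : ℝ) *
      (Polynomial.C (2 * (n : ℝ) + 3) * Polynomial.X + Polynomial.C (2 * (n : ℝ) + 1)) *
      U ℝ ((n : ℤ) - 1)



lemma U_deg_coeff (m : ℕ) : (U ℝ (m:ℤ)).natDegree ≤ m ∧ (U ℝ (m:ℤ)).coeff m = 2^m := by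
  induction m using Nat.twoStepInduction with
  | zero => simp
  | one =>
    have h2 : (U ℝ ((1:ℕ):ℤ)) = 2 * X := by norm_num
    constructor
    · rw [h2]; exact (natDegree_mul_le).trans (by simp)
    · rw [h2, two_mul, coeff_add, coeff_X, if_pos rfl]; norm_num
  | more m ih1 ih2 =>
    have h : U ℝ ((m:ℤ)+2) = 2 * X * U ℝ ((m:ℤ)+1) - U ℝ (m:ℤ) := U_add_two ℝ (m:ℤ)
    have hc : ((m:ℤ)+2) = ((m+2 : ℕ) : ℤ) := by push_cast; ring
    have hc1 : ((m:ℤ)+1) = ((m+1 : ℕ) : ℤ) := by push_cast; ring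
    rw [hc, hc1] at h
    rw [h]
    have h2X : ((2:ℝ[X]) * X).natDegree ≤ 1 := natDegree_mul_le.trans (by simp)
    constructor
    · refine (natDegree_sub_le _ _).trans (sup_le (natDegree_mul_le.trans ?_) (ih1.1.trans (by omega)))
      omega
    · rw [mul_assoc, two_mul, coeff_sub, coeff_add, coeff_X_mul,
        coeff_eq_zero_of_natDegree_lt (by omega : (U ℝ (m:ℤ)).natDegree < m + 2), ih2.2]
      ring

lemma U_eval_one' (m : ℕ) : (U ℝ (m:ℤ)).eval 1 = m + 1 := by
  induction m using Nat.twoStepInduction with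
  | zero => simp
  | one => norm_num
  | more m ih1 ih2 =>
    have h : U ℝ ((m:ℤ)+2) = 2 * X * U ℝ ((m:ℤ)+1) - U ℝ (m:ℤ) := U_add_two ℝ (m:ℤ)
    have hc : ((m:ℤ)+2) = ((m+2 : ℕ) : ℤ) := by push_cast; ring
    have hc1 : ((m:ℤ)+1) = ((m+1 : ℕ) : ℤ) := by push_cast; ring
    rw [hc, hc1] at h
    rw [h]
    simp only [eval_sub, eval_mul, eval_ofNat, eval_X, ih1, ih2]
    push_cast
    ring

lemma U_eval_neg_one' (m : ℕ) : (U ℝ (m:ℤ)).eval (-1) = (-1)^m * (m + 1) := by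
  induction m using Nat.twoStepInduction with
  | zero => simp
  | one => norm_num
  | more m ih1 ih2 =>
    have h : U ℝ ((m:ℤ)+2) = 2 * X * U ℝ ((m:ℤ)+1) - U ℝ (m:ℤ) := U_add_two ℝ (m:ℤ)
    have hc : ((m:ℤ)+2) = ((m+2 : ℕ) : ℤ) := by push_cast; ring
    have hc1 : ((m:ℤ)+1) = ((m+1 : ℕ) : ℤ) := by push_cast; ring
    rw [hc, hc1] at h
    rw [h]
    simp only [eval_sub, eval_mul, eval_ofNat, eval_X, ih1, ih2]
    push_cast
    ring

lemma Um_eval_one (n : ℕ) : (U ℝ ((n:ℤ)-1)).eval 1 = n := by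
  cases n with
  | zero => simp
  | succ m => have : ((m+1:ℕ):ℤ) - 1 = (m:ℤ) := by push_cast; ring
              rw [this, U_eval_one' m]; push_cast; ring

lemma Um_eval_neg_one (n : ℕ) : (U ℝ ((n:ℤ)-1)).eval (-1) = -(-1)^n * n := by
  cases n with
  | zero => simp
  | succ m => have : ((m+1:ℕ):ℤ) - 1 = (m:ℤ) := by push_cast; ring
              rw [this, U_eval_neg_one' m]; push_cast; ring

lemma Um_natDegree (n : ℕ) : (U ℝ ((n:ℤ)-1)).natDegree ≤ n := by
  cases n with
  | zero => simp
  | succ m => have : ((m+1:ℕ):ℤ) - 1 = (m:ℤ) := by push_cast; ring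
              rw [this]; exact (U_deg_coeff m).1.trans (by omega)

lemma S_expand (n : ℕ) : S2n1 n =
    C (2:ℝ) * (C (2*(n:ℝ)+2) * (X^2 * U ℝ (n:ℤ)))
      + C (2:ℝ) * (C (2*(n:ℝ)-1) * (X * U ℝ (n:ℤ)))
      - C (2:ℝ) * U ℝ (n:ℤ)
      - (C (2:ℝ) * (C (2*(n:ℝ)+3) * (X * U ℝ ((n:ℤ)-1)))
          + C (2:ℝ) * (C (2*(n:ℝ)+1) * U ℝ ((n:ℤ)-1))) := by
  unfold S2n1; ring

lemma S_natDegree (n : ℕ) : (S2n1 n).natDegree ≤ n + 2 := by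
  rw [S_expand]
  have hU := (U_deg_coeff n).1
  have hUm := Um_natDegree n
  have b1 : ((X:ℝ[X])^2 * U ℝ (n:ℤ)).natDegree ≤ n + 2 :=
    natDegree_mul_le.trans (by have := natDegree_X_pow_le (R := ℝ) 2; omega)
  have b2 : ((X:ℝ[X]) * U ℝ (n:ℤ)).natDegree ≤ n + 2 :=
    natDegree_mul_le.trans (by have := natDegree_X_le (R := ℝ); omega)
  have b4 : ((X:ℝ[X]) * U ℝ ((n:ℤ)-1)).natDegree ≤ n + 2 :=
    natDegree_mul_le.trans (by have := natDegree_X_le (R := ℝ); omega)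
  refine (natDegree_sub_le _ _).trans (sup_le ((natDegree_sub_le _ _).trans (sup_le
    ((natDegree_add_le _ _).trans (sup_le
      ((natDegree_C_mul_le _ _).trans ((natDegree_C_mul_le _ _).trans b1))
      ((natDegree_C_mul_le _ _).trans ((natDegree_C_mul_le _ _).trans b2))))
    ((natDegree_C_mul_le _ _).trans (hU.trans (by omega)))))
    ((natDegree_add_le _ _).trans (sup_le
      ((natDegree_C_mul_le _ _).trans ((natDegree_C_mul_le _ _).trans b4))
      ((natDegree_C_mul_le _ _).trans ((natDegree_C_mul_le _ _).trans (hUm.trans (by omega)))))))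

lemma S_coeff (n : ℕ) : (S2n1 n).coeff (n+2) = (4*(n:ℝ)+4) * 2^n := by
  rw [S_expand]
  have hU := (U_deg_coeff n).1
  have hUm := Um_natDegree n
  have e1 : ((X:ℝ[X])^2 * U ℝ (n:ℤ)).coeff (n+2) = 2^n := by
    rw [coeff_X_pow_mul]; exact (U_deg_coeff n).2
  have e2 : ((X:ℝ[X]) * U ℝ (n:ℤ)).coeff (n+2) = 0 := by
    rw [show n+2 = (n+1)+1 from rfl, coeff_X_mul]
    exact coeff_eq_zero_of_natDegree_lt (by omega)
  have e3 : (U ℝ (n:ℤ)).coeff (n+2) = 0 := coeff_eq_zero_of_natDegree_lt (by omega)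
  have e4 : ((X:ℝ[X]) * U ℝ ((n:ℤ)-1)).coeff (n+2) = 0 := by
    rw [show n+2 = (n+1)+1 from rfl, coeff_X_mul]
    exact coeff_eq_zero_of_natDegree_lt (by omega)
  have e5 : (U ℝ ((n:ℤ)-1)).coeff (n+2) = 0 := coeff_eq_zero_of_natDegree_lt (by omega)
  simp only [coeff_sub, coeff_add, coeff_C_mul, e1, e2, e3, e4, e5]
  ring

lemma S_coeff_ne (n : ℕ) : (S2n1 n).coeff (n+2) ≠ 0 := by
  rw [S_coeff]; positivity

lemma S_ne_zero (n : ℕ) : S2n1 n ≠ 0 := fun h => S_coeff_ne n (by rw [h]; simp)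

lemma S_deriv_ne_zero (n : ℕ) : derivative (S2n1 n) ≠ 0 := by
  intro h
  have : (derivative (S2n1 n)).coeff (n+1) = 0 := by rw [h]; simp
  rw [coeff_derivative, show n+1+1 = n+2 from rfl] at this
  have h2 := S_coeff_ne n
  rcases mul_eq_zero.mp this with h3 | h3
  · exact h2 h3
  · have : (0:ℝ) < (↑(n+1) + 1 : ℝ) := by positivity
    linarith

lemma S_eval_one (n : ℕ) : (S2n1 n).eval 1 = 0 := by
  unfold S2n1
  simp only [eval_sub, eval_mul, eval_add, eval_C, eval_X, eval_pow, eval_one,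
    U_eval_one' n, Um_eval_one n]
  ring

lemma S_eval_neg_one (n : ℕ) : (S2n1 n).eval (-1) = 4 * (-1)^n := by
  unfold S2n1
  simp only [eval_sub, eval_mul, eval_add, eval_C, eval_X, eval_pow, eval_one,
    U_eval_neg_one' n, Um_eval_neg_one n]
  ring

lemma S_eval_cos (n : ℕ) (θ : ℝ) : (S2n1 n).eval (cos θ) * sin θ =
    2*((2*(n:ℝ)+2)*cos θ^2 + (2*(n:ℝ)-1)*cos θ - 1) * sin (((n:ℝ)+1)*θ)
      - 2*((2*(n:ℝ)+3)*cos θ + (2*(n:ℝ)+1)) * sin ((n:ℝ)*θ) := by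
  have h1 := U_real_cos θ (n:ℤ)
  have h2 := U_real_cos θ ((n:ℤ)-1)
  push_cast at h1 h2
  rw [show ((n:ℝ)-1+1) = (n:ℝ) by ring] at h2
  unfold S2n1
  simp only [eval_sub, eval_mul, eval_add, eval_C, eval_X, eval_pow, eval_one]
  linear_combination (2*((2*(n:ℝ)+2)*cos θ^2 + (2*(n:ℝ)-1)*cos θ - 1)) * h1
    - (2*((2*(n:ℝ)+3)*cos θ + (2*(n:ℝ)+1))) * h2

lemma S_eval_xi (n k : ℕ) (hk1 : 1 ≤ k) (hk2 : k ≤ n + 1) :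
    (S2n1 n).eval (cos ((2*(k:ℝ)-1)*π/(2*(n:ℝ)+2))) * sin ((2*(k:ℝ)-1)*π/(2*(n:ℝ)+2))
      = 2 * (-1)^k * (1 + cos ((2*(k:ℝ)-1)*π/(2*(n:ℝ)+2)))^2 := by
  set θ := (2*(k:ℝ)-1)*π/(2*(n:ℝ)+2) with hθ
  have hden : (2*(n:ℝ)+2) ≠ 0 := by positivity
  have hnθ : ((n:ℝ)+1)*θ = (k:ℝ)*π - π/2 := by rw [hθ]; field_simp
  have hsin1 : sin (((n:ℝ)+1)*θ) = -(-1)^k := by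
    rw [hnθ, sin_nat_mul_pi_sub]; simp
  have hcos1 : cos (((n:ℝ)+1)*θ) = 0 := by
    rw [hnθ, cos_nat_mul_pi_sub]; simp
  have hsinn : sin ((n:ℝ)*θ) = -(-1)^k * cos θ := by
    have : (n:ℝ)*θ = ((n:ℝ)+1)*θ - θ := by ring
    rw [this, sin_sub, hsin1, hcos1]; ring
  rw [S_eval_cos n θ, hsin1, hsinn]
  ring

lemma theta_mem (n k : ℕ) (hk1 : 1 ≤ k) (hk2 : k ≤ n + 1) :
    0 < (2*(k:ℝ)-1)*π/(2*(n:ℝ)+2) ∧ (2*(k:ℝ)-1)*π/(2*(n:ℝ)+2) < π := by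
  have hπ := pi_pos
  have hk1' : (1:ℝ) ≤ (k:ℝ) := by exact_mod_cast hk1
  have hk2' : (k:ℝ) ≤ (n:ℝ) + 1 := by exact_mod_cast hk2
  constructor
  · apply div_pos (by nlinarith) (by positivity)
  · rw [div_lt_iff₀ (by positivity)]
    nlinarith

lemma S_sign_xi (n k : ℕ) (hk1 : 1 ≤ k) (hk2 : k ≤ n + 1) :
    0 < (-1)^k * (S2n1 n).eval (cos ((2*(k:ℝ)-1)*π/(2*(n:ℝ)+2))) := by
  set θ := (2*(k:ℝ)-1)*π/(2*(n:ℝ)+2) with hθ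
  obtain ⟨h0, h1⟩ := theta_mem n k hk1 hk2
  have hs : 0 < sin θ := sin_pos_of_pos_of_lt_pi h0 h1
  have hc : -1 < cos θ := by
    have := cos_lt_cos_of_nonneg_of_le_pi h0.le le_rfl h1
    rwa [cos_pi] at this
  have heq := S_eval_xi n k hk1 hk2
  rw [← hθ] at heq
  have he2 : ((-1:ℝ)^k)^2 = 1 := by
    rw [← pow_mul, mul_comm, pow_mul]; norm_num
  have key : (-1)^k * (S2n1 n).eval (cos θ) = 2 * (1 + cos θ)^2 / sin θ := by
    rw [eq_div_iff hs.ne']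
    linear_combination (-1:ℝ)^k * heq + 2 * (1 + cos θ)^2 * he2
  rw [key]
  have h1c : (0:ℝ) < 1 + cos θ := by linarith
  positivity

/-- For `n ≥ 0`, with `ξ₀ = 1`, `ξ_{n+2} = −1`, and
`ξ_k = cos((2k−1)π/(2n+2))` for `1 ≤ k ≤ n+1`, the `ξ_k` are strictly decreasing,
`S_{2n+1}` has exactly one zero in each interval `(ξ_{k+1}, ξ_k)` for `1 ≤ k ≤ n+1`;
these zeroes together with `x = 1` exhaust the zeroes of `S_{2n+1}`, all of which
are simple. -/
theorem zeroes_of_S_odd (n : ℕ) (ξ : ℕ → ℝ)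
    (hξ0 : ξ 0 = 1) (hξtop : ξ (n + 2) = -1)
    (hξ : ∀ k, 1 ≤ k → k ≤ n + 1 → ξ k = Real.cos ((2 * k - 1) * π / (2 * n + 2))) :
    (∀ k, k ≤ n + 1 → ξ (k + 1) < ξ k) ∧
    (∀ k, 1 ≤ k → k ≤ n + 1 →
      ∃! x, x ∈ Set.Ioo (ξ (k + 1)) (ξ k) ∧ (S2n1 n).eval x = 0) ∧
    (∀ x : ℝ, (S2n1 n).eval x = 0 →
      x = 1 ∨ ∃ k, 1 ≤ k ∧ k ≤ n + 1 ∧ x ∈ Set.Ioo (ξ (k + 1)) (ξ k)) ∧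
    (∀ x : ℝ, (S2n1 n).eval x = 0 →
      (Polynomial.derivative (S2n1 n)).eval x ≠ 0) := by
  -- sign hypothesis
  have hsign : ∀ k, 1 ≤ k → k ≤ n + 2 → 0 < (-1:ℝ)^k * (S2n1 n).eval (ξ k) := by
    intro k h1 h2
    rcases Nat.lt_or_ge k (n+2) with h | h
    · rw [hξ k h1 (by omega)]
      exact S_sign_xi n k h1 (by omega)
    · have hk : k = n + 2 := by omega
      subst hk
      rw [hξtop, S_eval_neg_one]
      have he2 : ((-1:ℝ)^n)^2 = 1 := by rw [← pow_mul, mul_comm, pow_mul]; norm_num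
      have : ((-1:ℝ))^(n+2) * (4 * (-1)^n) = 4 := by
        rw [pow_add]; nlinarith [he2]
      rw [this]; norm_num
  -- part 1 : strict decrease
  have part1 : ∀ k, k ≤ n + 1 → ξ (k + 1) < ξ k := by
    intro k hk
    rcases Nat.eq_zero_or_pos k with rfl | hk1
    · rw [hξ0, hξ 1 le_rfl (by omega)]
      have ht := theta_mem n 1 le_rfl (by omega)
      have := cos_lt_cos_of_nonneg_of_le_pi le_rfl ht.2.le ht.1
      rwa [cos_zero] at this
      
    · rcases Nat.lt_or_ge k (n+1) with h | h
      · rw [hξ k hk1 (by omega), hξ (k+1) (by omega) (by omega)]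
        have ht1 := theta_mem n k hk1 (by omega)
        have ht2 := theta_mem n (k+1) (by omega) (by omega)
        apply cos_lt_cos_of_nonneg_of_le_pi ht1.1.le ht2.2.le
        have hπ := pi_pos
        rw [div_lt_div_iff₀ (by positivity) (by positivity)]
        push_cast
        nlinarith
      · have hk' : k = n + 1 := by omega
        subst hk'
        rw [hξtop, hξ (n+1) (by omega) le_rfl]
        have ht := theta_mem n (n+1) (by omega) le_rfl
        have := cos_lt_cos_of_nonneg_of_le_pi ht.1.le le_rfl ht.2
        rwa [cos_pi] at this
  -- monotone
  have hmono : ∀ i j, i ≤ j → j ≤ n + 2 → ξ j ≤ ξ i := by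
    intro i j hij hj
    induction j with
    | zero => have : i = 0 := by omega
              subst this; exact le_rfl
    | succ m ih =>
      rcases Nat.lt_or_ge i (m+1) with h | h
      · exact le_trans (part1 m (by omega)).le (ih (by omega) (by omega))
      · have : i = m + 1 := by omega
        subst this; exact le_rfl
  -- IVT roots
  have hIVT : ∀ k, 1 ≤ k → k ≤ n + 1 →
      ∃ x, x ∈ Set.Ioo (ξ (k+1)) (ξ k) ∧ (S2n1 n).eval x = 0 := by
    intro k hk1 hk2
    have hlt := part1 k hk2
    have ha := hsign (k+1) (by omega) (by omega)
    have hb := hsign k (by omega) (by omega)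
    have hcont : ContinuousOn (fun x => (S2n1 n).eval x) (Set.Icc (ξ (k+1)) (ξ k)) :=
      ((S2n1 n).continuous).continuousOn
    rcases Nat.even_or_odd k with he | ho
    · rw [he.neg_one_pow, one_mul] at hb
      rw [(he.add_one).neg_one_pow, neg_one_mul, lt_neg, neg_zero] at ha
      have h0 : (0:ℝ) ∈ Set.Ioo ((S2n1 n).eval (ξ (k+1))) ((S2n1 n).eval (ξ k)) := ⟨ha, hb⟩
      obtain ⟨x, hx, hfx⟩ := intermediate_value_Ioo hlt.le hcont h0
      exact ⟨x, hx, hfx⟩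
    · rw [ho.neg_one_pow, neg_one_mul, lt_neg, neg_zero] at hb
      rw [(Odd.add_one ho).neg_one_pow, one_mul] at ha
      have h0 : (0:ℝ) ∈ Set.Ioo ((S2n1 n).eval (ξ k)) ((S2n1 n).eval (ξ (k+1))) := ⟨hb, ha⟩
      obtain ⟨x, hx, hfx⟩ := intermediate_value_Ioo' hlt.le hcont h0
      exact ⟨x, hx, hfx⟩
  -- choose roots
  obtain ⟨r, hr⟩ : ∃ r : ℕ → ℝ, ∀ k, 1 ≤ k → k ≤ n + 1 →
      r k ∈ Set.Ioo (ξ (k+1)) (ξ k) ∧ (S2n1 n).eval (r k) = 0 := by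
    refine ⟨fun k => if h : 1 ≤ k ∧ k ≤ n + 1 then (hIVT k h.1 h.2).choose else 0, ?_⟩
    intro k h1 h2
    simp only []
    rw [dif_pos ⟨h1, h2⟩]
    exact (hIVT k h1 h2).choose_spec
  have hxi1lt : ξ 1 < 1 := by rw [← hξ0]; exact part1 0 (by omega)
  have hrlt1 : ∀ k, 1 ≤ k → k ≤ n + 1 → r k < 1 := by
    intro k h1 h2
    calc r k < ξ k := (hr k h1 h2).1.2
    _ ≤ ξ 1 := hmono 1 k h1 (by omega)
    _ < 1 := hxi1lt
  -- the finset of roots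
  set F : Finset ℝ := insert 1 ((Finset.Icc 1 (n+1)).image r) with hF
  have hinj : Set.InjOn r (Finset.Icc 1 (n+1)) := by
    intro a ha b hb hab
    simp only [Finset.coe_Icc, Set.mem_Icc] at ha hb
    by_contra hne
    rcases lt_or_gt_of_ne hne with h | h
    · have h1 : r b < ξ b := (hr b hb.1 hb.2).1.2
      have h2 : ξ b ≤ ξ (a+1) := hmono (a+1) b (by omega) (by omega)
      have h3 : ξ (a+1) < r a := (hr a ha.1 ha.2).1.1
      rw [hab] at h3; linarith
    · have h1 : r a < ξ a := (hr a ha.1 ha.2).1.2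
      have h2 : ξ a ≤ ξ (b+1) := hmono (b+1) a (by omega) (by omega)
      have h3 : ξ (b+1) < r b := (hr b hb.1 hb.2).1.1
      rw [hab] at h1; linarith
  have h1notmem : (1:ℝ) ∉ (Finset.Icc 1 (n+1)).image r := by
    simp only [Finset.mem_image, Finset.mem_Icc, not_exists]
    rintro k ⟨⟨h1, h2⟩, h3⟩
    exact absurd h3 (hrlt1 k h1 h2).ne
  have hcardF : F.card = n + 2 := by
    rw [hF, Finset.card_insert_of_notMem h1notmem,
      Finset.card_image_of_injOn hinj, Nat.card_Icc]
    omega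
  have hFsub : F ⊆ (S2n1 n).roots.toFinset := by
    intro x hx
    rw [Multiset.mem_toFinset, mem_roots']
    refine ⟨S_ne_zero n, ?_⟩
    rw [hF, Finset.mem_insert] at hx
    rcases hx with rfl | hx
    · exact S_eval_one n
    · obtain ⟨k, hk, rfl⟩ := Finset.mem_image.mp hx
      simp only [Finset.mem_Icc] at hk
      exact (hr k hk.1 hk.2).2
  have hcardle : (S2n1 n).roots.toFinset.card ≤ n + 2 :=
    le_trans (Multiset.toFinset_card_le _) (le_trans ((S2n1 n).card_roots') (S_natDegree n))
  have hFeq : F = (S2n1 n).roots.toFinset :=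
    Finset.eq_of_subset_of_card_le hFsub (by omega)
  have hnodup : (S2n1 n).roots.Nodup := by
    rw [← Multiset.toFinset_card_eq_card_iff_nodup]
    have h1 : (S2n1 n).roots.toFinset.card = n + 2 := by rw [← hFeq]; exact hcardF
    have h2 : Multiset.card (S2n1 n).roots ≤ n + 2 :=
      le_trans ((S2n1 n).card_roots') (S_natDegree n)
    have h3 := Multiset.toFinset_card_le (S2n1 n).roots
    omega
  have hmem_iff : ∀ x : ℝ, (S2n1 n).eval x = 0 → x ∈ F := by
    intro x hx
    rw [hFeq, Multiset.mem_toFinset, mem_roots']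
    exact ⟨S_ne_zero n, hx⟩
  refine ⟨part1, ?_, ?_, ?_⟩
  · -- unique root in each interval
    intro k hk1 hk2
    refine ⟨r k, ⟨(hr k hk1 hk2).1, (hr k hk1 hk2).2⟩, ?_⟩
    rintro y ⟨hy, hy0⟩
    have hyF := hmem_iff y hy0
    rw [hF, Finset.mem_insert] at hyF
    rcases hyF with rfl | hyF
    · exfalso
      have : (1:ℝ) < ξ k := hy.2
      have : ξ k ≤ ξ 1 := hmono 1 k hk1 (by omega)
      linarith
    · obtain ⟨j, hj, rfl⟩ := Finset.mem_image.mp hyF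
      simp only [Finset.mem_Icc] at hj
      congr 1
      by_contra hne
      rcases Nat.lt_or_ge j k with h | h
      · have h1 : r j < ξ k := hy.2
        have h2 : ξ k ≤ ξ (j+1) := hmono (j+1) k (by omega) (by omega)
        have h3 : ξ (j+1) < r j := (hr j hj.1 hj.2).1.1
        linarith
      · have hjk : k < j := by omega
        have h1 : ξ (k+1) < r j := hy.1
        have h2 : r j < ξ j := (hr j hj.1 hj.2).1.2
        have h3 : ξ j ≤ ξ (k+1) := hmono (k+1) j (by omega) (by omega)
        linarith
  · -- exhaustion
    intro x hx
    have hxF := hmem_iff x hx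
    rw [hF, Finset.mem_insert] at hxF
    rcases hxF with rfl | hxF
    · exact Or.inl rfl
    · obtain ⟨k, hk, rfl⟩ := Finset.mem_image.mp hxF
      simp only [Finset.mem_Icc] at hk
      exact Or.inr ⟨k, hk.1, hk.2, (hr k hk.1 hk.2).1⟩
  · -- simplicity
    intro x hx hder
    have hxroot : x ∈ (S2n1 n).roots := mem_roots'.mpr ⟨S_ne_zero n, hx⟩
    have hcount : (S2n1 n).roots.count x = 1 := Multiset.count_eq_one_of_mem hnodup hxroot
    have hmult : (S2n1 n).rootMultiplicity x = 1 := by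
      rw [← Polynomial.count_roots]; exact hcount
    have hpos : 0 < (derivative (S2n1 n)).rootMultiplicity x :=
      (Polynomial.rootMultiplicity_pos (S_deriv_ne_zero n)).mpr hder
    rw [Polynomial.derivative_rootMultiplicity_of_root hx] at hpos
    omega
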